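/- arXiv:1406.7158 — 3 statements merged into one kernel-verified Lean document; each statement's English description precedes it below -/
import Mathlib

section
/- The image of the closed standard fundamental domain 𝔉̄ under the Möbius transformation S : z ↦ −1/z is exactly the set {z ∈ ℍ : |z| ≤ 1, |z+1| ≥ 1, and |z−1| ≥ 1}. -/
/-! `S` is an involution, so the image of `𝔉̄` is its preimage `{w | -w⁻¹ ∈ 𝔉̄}`. Since
`-w⁻¹ = -conj w / |w|²`, the conditions on `-w⁻¹` read `Im w > 0`, `|w| ≤ 1` and
`2 |Re w| ≤ |w|²`, and the last one says `|w + 1|² = |w|² + 2 Re w + 1 ≥ 1` and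
`|w - 1|² = |w|² - 2 Re w + 1 ≥ 1`. -/

open Complex

def FundDom : Set ℂ :=
  {z : ℂ | 0 < z.im ∧ 1 ≤ ‖z‖ ∧ |z.re| ≤ 1 / 2}

namespace Complex

theorem involutive_neg_inv : Function.Involutive (fun z : ℂ => -z⁻¹) := fun z => by
  simp only [inv_neg, inv_inv, neg_neg]

theorem im_neg_inv_pos_iff (w : ℂ) : 0 < (-w⁻¹).im ↔ 0 < w.im := by
  rcases eq_or_ne w 0 with rfl | hw
  · simp
  · rw [neg_im, inv_im, neg_div, neg_neg, div_pos_iff_of_pos_right (normSq_pos.2 hw)]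

theorem one_le_norm_neg_inv_iff {w : ℂ} (hw : w ≠ 0) : 1 ≤ ‖-w⁻¹‖ ↔ ‖w‖ ≤ 1 := by
  rw [norm_neg, norm_inv, one_le_inv₀ (norm_pos_iff.2 hw)]

theorem one_le_norm_add_one_iff (w : ℂ) : 1 ≤ ‖w + 1‖ ↔ -(2 * w.re) ≤ normSq w := by
  rw [← one_le_normSq_iff, normSq_add, normSq_one, map_one, mul_one]
  constructor <;> intro h <;> linarith

theorem one_le_norm_sub_one_iff (w : ℂ) : 1 ≤ ‖w - 1‖ ↔ 2 * w.re ≤ normSq w := by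
  rw [← one_le_normSq_iff, normSq_sub, normSq_one, map_one, mul_one]
  constructor <;> intro h <;> linarith

theorem abs_re_neg_inv_le_half_iff {w : ℂ} (hw : w ≠ 0) :
    |(-w⁻¹).re| ≤ 1 / 2 ↔ 1 ≤ ‖w + 1‖ ∧ 1 ≤ ‖w - 1‖ := by
  rw [neg_re, inv_re, abs_neg, abs_div, abs_of_pos (normSq_pos.2 hw),
    div_le_iff₀ (normSq_pos.2 hw), one_le_norm_add_one_iff, one_le_norm_sub_one_iff, abs_le]
  constructor <;> rintro ⟨h₁, h₂⟩ <;> constructor <;> linarith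

end Complex

theorem neg_inv_mem_fundDom_iff (w : ℂ) :
    -w⁻¹ ∈ FundDom ↔ 0 < w.im ∧ ‖w‖ ≤ 1 ∧ 1 ≤ ‖w + 1‖ ∧ 1 ≤ ‖w - 1‖ := by
  rcases eq_or_ne w 0 with rfl | hw
  · simp [FundDom]
  · simp only [FundDom, Set.mem_ofPred_eq, im_neg_inv_pos_iff, one_le_norm_neg_inv_iff hw,
      abs_re_neg_inv_le_half_iff hw]

/-- The image of the closed standard fundamental domain under `S : z ↦ -1/z` is exactly
`{z ∈ ℍ : |z| ≤ 1, |z+1| ≥ 1, |z-1| ≥ 1}`. -/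
theorem image_fundDom_S :
    (fun z : ℂ => -z⁻¹) '' FundDom =
      {z : ℂ | 0 < z.im ∧ ‖z‖ ≤ 1 ∧
        1 ≤ ‖z + 1‖ ∧ 1 ≤ ‖z - 1‖} := by
  rw [involutive_neg_inv.image_eq_preimage_symm]
  ext w
  exact neg_inv_mem_fundDom_iff w
end

section
/- The image of the closed standard fundamental domain 𝔉̄ under the Möbius transformation ST⁻¹ : z ↦ −1/(z−1) is exactly the set {z ∈ ℍ : Re z ≤ 1/2, |z − 1/3| ≥ 1/3, and |z−1| ≤ 1}. -/
open Complex

namespace Complex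

lemma sq_norm_sub_ofReal (w : ℂ) (r : ℝ) : ‖w - r‖ ^ 2 = normSq w - 2 * r * w.re + r ^ 2 := by
  rw [Complex.sq_norm, normSq_apply, normSq_apply]
  simp only [sub_re, ofReal_re, sub_im, ofReal_im, sub_zero]
  ring

lemma norm_le_norm_sub_one_iff (w : ℂ) : ‖w‖ ≤ ‖w - 1‖ ↔ w.re ≤ 1 / 2 := by
  rw [← sq_le_sq₀ (norm_nonneg _) (norm_nonneg _), ← ofReal_one, sq_norm_sub_ofReal,
    Complex.sq_norm]
  constructor <;> intro h <;> linarith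

lemma one_le_norm_one_sub_inv_iff {w : ℂ} (hw : w ≠ 0) : 1 ≤ ‖1 - w⁻¹‖ ↔ w.re ≤ 1 / 2 := by
  have h : 1 - w⁻¹ = (w - 1) / w := by field_simp
  rw [h, norm_div, one_le_div (norm_pos_iff.2 hw), norm_le_norm_sub_one_iff]

lemma inv_two_mul_le_inv_re_iff {w : ℂ} (hw : w ≠ 0) {r : ℝ} (hr : 0 < r) :
    (2 * r)⁻¹ ≤ w⁻¹.re ↔ ‖w - r‖ ≤ r := by
  rw [inv_re, le_div_iff₀ (normSq_pos.2 hw), ← sq_le_sq₀ (norm_nonneg _) hr.le, sq_norm_sub_ofReal,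
    inv_mul_le_iff₀ (by positivity)]
  constructor <;> intro h <;> linarith

lemma inv_re_le_inv_two_mul_iff {w : ℂ} (hw : w ≠ 0) {r : ℝ} (hr : 0 < r) :
    w⁻¹.re ≤ (2 * r)⁻¹ ↔ r ≤ ‖w - r‖ := by
  rw [inv_re, div_le_iff₀ (normSq_pos.2 hw), ← sq_le_sq₀ hr.le (norm_nonneg _), sq_norm_sub_ofReal,
    le_inv_mul_iff₀ (by positivity)]
  constructor <;> intro h <;> linarith

lemma im_one_sub_inv_pos_iff (w : ℂ) : 0 < (1 - w⁻¹).im ↔ 0 < w.im := by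
  rw [sub_im, one_im, inv_im, zero_sub, neg_div, neg_neg]
  rcases eq_or_ne w 0 with rfl | hw
  · simp
  · exact div_pos_iff_of_pos_right (normSq_pos.2 hw)

lemma abs_re_one_sub_inv_le_half_iff {w : ℂ} (hw : w ≠ 0) :
    |(1 - w⁻¹).re| ≤ 1 / 2 ↔ 1 / 3 ≤ ‖w - 1 / 3‖ ∧ ‖w - 1‖ ≤ 1 := by
  have h3 := inv_re_le_inv_two_mul_iff hw (r := 1 / 3) (by norm_num)
  have h1 := inv_two_mul_le_inv_re_iff hw (r := 1) one_pos
  norm_num [-inv_re] at h3 h1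
  rw [abs_le, sub_re, one_re, ← h3, ← h1]
  constructor <;> rintro ⟨_, _⟩ <;> constructor <;> linarith

end Complex

open Set

/-- The image of the closed standard fundamental domain under `ST⁻¹ : z ↦ -1/(z-1)` is
exactly `{z ∈ ℍ : Re z ≤ 1/2, |z - 1/3| ≥ 1/3, |z-1| ≤ 1}`. -/
theorem image_fundDom_ST_inv :
    (fun z : ℂ => -(z - 1)⁻¹) '' FundDom =
      {z : ℂ | 0 < z.im ∧ z.re ≤ 1 / 2 ∧
        1 / 3 ≤ ‖z - 1 / 3‖ ∧ ‖z - 1‖ ≤ 1} := by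
  rw [image_eq_preimage_of_inverse (g := fun w => 1 - w⁻¹) (fun z => by simp)
    (fun w => by simp)]
  ext w
  rcases eq_or_ne w 0 with rfl | hw
  · simp [FundDom]
  simp only [FundDom, mem_preimage, mem_ofPred_eq, im_one_sub_inv_pos_iff,
    one_le_norm_one_sub_inv_iff hw, abs_re_one_sub_inv_le_half_iff hw]
end

section
/- The union of 𝔉̄ with its images under the Möbius transformations S : z ↦ −1/z, ST : z ↦ −1/(z+1), and ST⁻¹ : z ↦ −1/(z−1) contains the strip {z ∈ ℍ : |Re z| ≤ 1/2 and Im z ≥ 1/3}. -/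
/-!
A point `z` of the strip with `|z| < 1` is sent by `S` to `u = -1/z`, which satisfies `|u| > 1`
and `|Re u| ≤ 3/2`, the latter because `Im z ≥ 1/3`. One of `u`, `u - 1`, `u + 1` then has real
part in `[-1/2, 1/2]`, and the translated point still has norm at least `1`, since
`|u ± 1| = |z ∓ 1| / |z|` and `|z ∓ 1| ≥ |z|` for `|Re z| ≤ 1/2`.
-/

open Complex

namespace Complex

lemma norm_le_norm_add_one_of_neg_half_le_re {z : ℂ} (h : -(1 / 2) ≤ z.re) : ‖z‖ ≤ ‖z + 1‖ := by
  rw [norm_def, norm_def]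
  gcongr
  simp only [normSq_apply, add_re, add_im, one_re, one_im]
  nlinarith

lemma norm_le_norm_sub_one_of_re_le_half {z : ℂ} (h : z.re ≤ 1 / 2) : ‖z‖ ≤ ‖z - 1‖ := by
  rw [norm_sub_rev, sub_eq_neg_add, ← norm_neg z]
  exact norm_le_norm_add_one_of_neg_half_le_re (by simpa using h)

/-- Since `Im z ≥ 1/3`, this is `|x| ≤ (3/2)(x² + y²)`, which follows from `(|x| - 1/3)² ≥ 0`. -/
lemma abs_re_neg_inv_le_three_halves {z : ℂ} (h : 1 / 3 ≤ z.im) : |(-z⁻¹).re| ≤ 3 / 2 := by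
  have hz : 0 < normSq z := normSq_pos.2 fun h0 => by simp [h0] at h; linarith
  rw [neg_re, abs_neg, inv_re, abs_div, abs_of_pos hz, div_le_iff₀ hz, normSq_apply]
  nlinarith [sq_nonneg (|z.re| - 1 / 3), sq_abs z.re]

end Complex

lemma neg_inv_add_mem_fundDom {z : ℂ} (c : ℝ) (hz : 0 < z.im) (hnorm : ‖z‖ ≤ ‖1 - c * z‖)
    (hre : |(-z⁻¹).re + c| ≤ 1 / 2) : -z⁻¹ + c ∈ FundDom := by
  have hz0 : z ≠ 0 := fun h0 => by simp [h0] at hz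
  refine ⟨?_, ?_, by simpa using hre⟩
  · simpa [inv_im, neg_div] using div_pos hz (normSq_pos.2 hz0)
  · have : -z⁻¹ + c = -(1 - c * z) / z := by field_simp; ring
    rw [this, norm_div, norm_neg, one_le_div (norm_pos_iff.2 hz0)]
    exact hnorm

/-- The union of the closed standard fundamental domain with its images under
`S : z ↦ -1/z`, `ST : z ↦ -1/(z+1)` and `ST⁻¹ : z ↦ -1/(z-1)` contains the strip
`{z ∈ ℍ : |Re z| ≤ 1/2, Im z ≥ 1/3}`. -/
theorem strip_subset_union_fundDom_images :
    {z : ℂ | 0 < z.im ∧ |z.re| ≤ 1 / 2 ∧ 1 / 3 ≤ z.im} ⊆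
      FundDom ∪ (fun z : ℂ => -z⁻¹) '' FundDom ∪
        (fun z : ℂ => -(z + 1)⁻¹) '' FundDom ∪
        (fun z : ℂ => -(z - 1)⁻¹) '' FundDom := by
  rintro z ⟨him, hre, him3⟩
  by_cases hnorm : 1 ≤ ‖z‖
  · exact Or.inl (Or.inl (Or.inl ⟨him, hnorm, hre⟩))
  obtain ⟨hre_lo, hre_hi⟩ := abs_le.1 hre
  obtain ⟨hu_lo, hu_hi⟩ := abs_le.1 (abs_re_neg_inv_le_three_halves him3)
  rcases le_or_gt |(-z⁻¹).re| (1 / 2) with hu | hu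
  · refine Or.inl (Or.inl (Or.inr ⟨-z⁻¹ + (0 : ℝ), neg_inv_add_mem_fundDom 0 him ?_ ?_, by simp⟩))
    · simpa using (not_le.1 hnorm).le
    · simpa using hu
  rcases lt_abs.1 hu with hu | hu
  · refine Or.inl (Or.inr ⟨-z⁻¹ + (-1 : ℝ), neg_inv_add_mem_fundDom (-1) him ?_ ?_, by simp⟩)
    · simpa [add_comm] using norm_le_norm_add_one_of_neg_half_le_re hre_lo
    · rw [abs_le]; constructor <;> linarith
  · refine Or.inr ⟨-z⁻¹ + (1 : ℝ), neg_inv_add_mem_fundDom 1 him ?_ ?_, by simp⟩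
    · simpa [norm_sub_rev] using norm_le_norm_sub_one_of_re_le_half hre_hi
    · rw [abs_le]; constructor <;> linarith
end
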